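/- Let G be a weighted graph and x a fractional matching on G (i.e., x_e ≥ 0 for each edge and Σ_{e∋u} x_e ≤ 1 for each vertex u). Suppose that for every vertex set S ⊆ V with |S| ≤ 1/ε, we have Σ_{e ∈ G[S]} x_e ≤ ⌊|S|/2⌋. Then the maximum weight matching satisfies μ_w(G) ≥ (1−ε)·Σ_e w_e x_e. -/

import Mathlib

/-!
Scaling `x` by `1 - ε` gives a point `y` of Edmonds' matching polytope: for `|S| ≤ 1 / ε` the
blossom inequality is assumed, and for larger `S` the degree constraints give `x(G[S]) ≤ |S| / 2`
while `(1 - ε) |S| / 2 ≤ (|S| - 1) / 2`. It remains to show `∑ w y ≤ μ_w(G)` for such `y`.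
Rounding `k w` down reduces this to integral weights, for which we induct on `∑ w`. If some
vertex `u` is covered by every maximum-weight matching, lowering the weights at `u` by one lowers
`μ_w` by one and `∑ w y` by at most `y(δ(u)) ≤ 1`. Otherwise every vertex is missed by some
maximum-weight matching, and a weighted Gallai lemma shows that lowering the weights on a
connected component `S` by one lowers `μ_w` by at least `⌊|S| / 2⌋ ≥ y(G[S])`.
-/

open scoped Classical BigOperators

noncomputable section

variable {V : Type*}

/-- A matching: a set of non-loop edges, pairwise vertex-disjoint. -/
def IsMatching (M : Finset (Sym2 V)) : Prop :=
  (∀ e ∈ M, ¬ e.IsDiag) ∧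
    ∀ e ∈ M, ∀ f ∈ M, e ≠ f → ∀ v : V, v ∈ e → v ∉ f

/-- μ(G): maximum cardinality of a matching contained in `G`. -/
def matchNum (G : Finset (Sym2 V)) : ℕ :=
  sSup {k | ∃ M : Finset (Sym2 V), M ⊆ G ∧ IsMatching M ∧ M.card = k}

/-- μ_w(G): maximum weight of a matching contained in `G` (ℕ-valued weights). -/
def matchWeight (G : Finset (Sym2 V)) (w : Sym2 V → ℕ) : ℕ :=
  sSup {s | ∃ M : Finset (Sym2 V), M ⊆ G ∧ IsMatching M ∧ ∑ e ∈ M, w e = s}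

/-- μ_w(G): maximum weight of a matching contained in `G` (ℝ-valued weights). -/
def matchWeightR (G : Finset (Sym2 V)) (w : Sym2 V → ℝ) : ℝ :=
  sSup {s | ∃ M : Finset (Sym2 V), M ⊆ G ∧ IsMatching M ∧ ∑ e ∈ M, w e = s}

/-- Degree of a vertex in an edge set. -/
def deg (H : Finset (Sym2 V)) (v : V) : ℕ := (H.filter fun e => v ∈ e).card

/-- The edge-degree deg_H(u) + deg_H(v) of an edge e = (u,v). -/
def degSum (H : Finset (Sym2 V)) (e : Sym2 V) : ℕ :=
  deg H e.out.1 + deg H e.out.2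

/-- The unfolded copies of a weighted edge e = (u,v):
the edges (u^i, v^{w_e+1-i}) for i ∈ [w_e]. -/
def unfoldEdge (w : Sym2 V → ℕ) (e : Sym2 V) : Finset (Sym2 (V × ℕ)) :=
  (Finset.Icc 1 (w e)).image fun i => s((e.out.1, i), (e.out.2, w e + 1 - i))

/-- The unfolding φ(G) of a weighted graph. -/
def unfoldGraph (G : Finset (Sym2 V)) (w : Sym2 V → ℕ) : Finset (Sym2 (V × ℕ)) :=
  G.biUnion (unfoldEdge w)

/-- The refolding R(H) ⊆ G of a subgraph H ⊆ φ(G): the weighted edges having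
at least one unfolded copy in H. -/
def refold (G : Finset (Sym2 V)) (w : Sym2 V → ℕ)
    (H : Finset (Sym2 (V × ℕ))) : Finset (Sym2 V) :=
  G.filter fun e => ∃ f ∈ unfoldEdge w e, f ∈ H

/-- A bipartite edge set: some side `A` of a bipartition meets every edge exactly once. -/
def IsBipartite (G : Finset (Sym2 V)) : Prop :=
  ∃ A : Set V, ∀ e ∈ G, ∃ u v, e = s(u, v) ∧ u ∈ A ∧ v ∉ A

open Finset
open SimpleGraph (fromEdgeSet fromEdgeSet_adj Reachable)
open scoped symmDiff

def verts (K : Finset (Sym2 V)) : Finset V := K.biUnion Sym2.toFinset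

section Matchings

variable {K L M N : Finset (Sym2 V)}

lemma mem_verts {v : V} : v ∈ verts K ↔ ∃ e ∈ K, v ∈ e := by
  simp [verts]

lemma mem_verts_iff_filter_nonempty {v : V} : v ∈ verts K ↔ (K.filter (v ∈ ·)).Nonempty := by
  simp [mem_verts, Finset.Nonempty]

lemma verts_mono (h : K ⊆ L) : verts K ⊆ verts L :=
  biUnion_subset_biUnion_of_subset_left _ h

lemma isMatching_empty : IsMatching (∅ : Finset (Sym2 V)) := ⟨by simp, by simp⟩

lemma IsMatching.subset (hM : IsMatching M) (h : N ⊆ M) : IsMatching N :=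
  ⟨fun e he => hM.1 e (h he), fun e he f hf => hM.2 e (h he) f (h hf)⟩

lemma IsMatching.card_verts (hM : IsMatching M) : (verts M).card = 2 * M.card := by
  rw [verts, card_biUnion, sum_congr rfl fun e he => Sym2.card_toFinset_of_not_isDiag e (hM.1 e he),
    sum_const, smul_eq_mul, mul_comm]
  intro e he f hf hef
  simp only [Function.onFun, Finset.disjoint_left, Sym2.mem_toFinset]
  exact hM.2 e he f hf hef

lemma card_sdiff_verts_add_two_mul_card (hM : IsMatching M) {C : Finset V} (hMC : verts M ⊆ C) :
    (C \ verts M).card + 2 * M.card = C.card := by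
  rw [← hM.card_verts, card_sdiff_add_card_eq_card hMC]

lemma IsMatching.insert (hM : IsMatching M) {a b : V} (hab : a ≠ b) (ha : a ∉ verts M)
    (hb : b ∉ verts M) : IsMatching (insert s(a, b) M) := by
  simp only [mem_verts, not_exists, not_and] at ha hb
  refine ⟨fun e he => ?_, fun e he f hf hef v hve hvf => ?_⟩
  · rcases mem_insert.mp he with rfl | he'
    · simpa using hab
    · exact hM.1 e he'
  · rcases mem_insert.mp he with rfl | he' <;> rcases mem_insert.mp hf with rfl | hf'
    · exact hef rfl
    · rcases Sym2.mem_iff.mp hve with rfl | rfl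
      exacts [ha f hf' hvf, hb f hf' hvf]
    · rcases Sym2.mem_iff.mp hvf with rfl | rfl
      exacts [ha e he' hve, hb e he' hve]
    · exact hM.2 e he' f hf' hef v hve hvf

lemma IsMatching.union (hM : IsMatching M) (hN : IsMatching N)
    (hMN : ∀ e ∈ M, ∀ f ∈ N, ∀ v ∈ e, v ∉ f) : IsMatching (M ∪ N) := by
  refine ⟨fun e he => (mem_union.mp he).elim (hM.1 e) (hN.1 e),
    fun e he f hf hef v hve hvf => ?_⟩
  rcases mem_union.mp he with he | he <;> rcases mem_union.mp hf with hf | hf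
  exacts [hM.2 e he f hf hef v hve hvf, hMN e he f hf v hve hvf, hMN f hf e he v hvf hve,
    hN.2 e he f hf hef v hve hvf]

end Matchings

def IsAdjClosed (K H : Finset (Sym2 V)) : Prop :=
  ∀ e ∈ K, ∀ f ∈ H, ∀ v ∈ e, v ∈ f → f ∈ K

section SymmDiff

variable {K M N : Finset (Sym2 V)}

lemma sdiff_eq_inter_of_subset_symmDiff (hK : K ⊆ N ∆ M) : K \ N = K ∩ M := by
  ext e
  have := @hK e
  simp only [mem_sdiff, mem_inter, mem_symmDiff] at this ⊢
  tauto

lemma filter_mem_symmDiff_of_mem_verts (hKNM : K ⊆ N ∆ M) (hK : IsAdjClosed K (N ∆ M)) {v : V}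
    (hv : v ∈ verts K) : (N ∆ K).filter (v ∈ ·) = M.filter (v ∈ ·) := by
  obtain ⟨e, he, hve⟩ := mem_verts.mp hv
  have hK' : ∀ f ∈ N ∆ M, v ∈ f → f ∈ K := fun f hf hvf => hK e he f hf v hve hvf
  ext f
  have := @hKNM f
  have := hK' f
  simp only [mem_filter, mem_symmDiff] at *
  tauto

lemma filter_mem_symmDiff_of_not_mem_verts {v : V} (hv : v ∉ verts K) :
    (N ∆ K).filter (v ∈ ·) = N.filter (v ∈ ·) := by
  have hK : ∀ f ∈ K, v ∉ f := fun f hf hvf => hv (mem_verts.mpr ⟨f, hf, hvf⟩)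
  ext f
  have := hK f
  simp only [mem_filter, mem_symmDiff]
  tauto

lemma IsMatching.symmDiff (hN : IsMatching N) (hM : IsMatching M) (hKNM : K ⊆ N ∆ M)
    (hK : IsAdjClosed K (N ∆ M)) : IsMatching (N ∆ K) := by
  have hsub : N ∆ K ⊆ N ∪ M := fun e he => by
    have := @hKNM e
    simp only [mem_symmDiff, mem_union] at he this ⊢
    tauto
  refine ⟨fun e he => (mem_union.mp (hsub he)).elim (hN.1 e) (hM.1 e),
    fun e he f hf hef v hve hvf => ?_⟩
  have hef' : e ∈ (N ∆ K).filter (v ∈ ·) ∧ f ∈ (N ∆ K).filter (v ∈ ·) :=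
    ⟨mem_filter.mpr ⟨he, hve⟩, mem_filter.mpr ⟨hf, hvf⟩⟩
  by_cases hv : v ∈ verts K
  · simp only [filter_mem_symmDiff_of_mem_verts hKNM hK hv, mem_filter] at hef'
    exact hM.2 e hef'.1.1 f hef'.2.1 hef v hve hvf
  · simp only [filter_mem_symmDiff_of_not_mem_verts hv, mem_filter] at hef'
    exact hN.2 e hef'.1.1 f hef'.2.1 hef v hve hvf

lemma sum_symmDiff_add_sum_inter {β : Type*} [AddCommMonoid β] (f : Sym2 V → β)
    (N K : Finset (Sym2 V)) :
    ∑ e ∈ N ∆ K, f e + ∑ e ∈ N ∩ K, f e = ∑ e ∈ N, f e + ∑ e ∈ K \ N, f e := by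
  rw [symmDiff_def, sup_eq_union, sum_union disjoint_sdiff_sdiff, ← sum_inter_add_sum_sdiff N K,
    add_right_comm, add_comm (∑ e ∈ N \ K, f e)]

end SymmDiff

section Components

variable {H K : Finset (Sym2 V)}

lemma SimpleGraph.Reachable.exists_adj_dist_add_one_eq {G : SimpleGraph V} {u v : V}
    (h : G.Reachable u v) (hvu : v ≠ u) : ∃ b, G.Adj v b ∧ G.dist u b + 1 = G.dist u v := by
  obtain ⟨p, hp⟩ := h.symm.exists_walk_length_eq_dist
  obtain ⟨b, hvb, q, rfl⟩ := SimpleGraph.Walk.exists_eq_cons_of_ne hvu p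
  have hqb : G.dist u b ≤ q.length := by simpa using SimpleGraph.dist_le q.reverse
  rw [SimpleGraph.Walk.length_cons, SimpleGraph.dist_comm] at hp
  refine ⟨b, hvb, ?_⟩
  rcases hvb.diff_dist_adj (u := u) with h | h | h <;> omega

lemma reachable_of_mem_of_mem {e : Sym2 V} (he : e ∈ H) {a b : V} (ha : a ∈ e) (hb : b ∈ e) :
    (fromEdgeSet ↑H).Reachable a b := by
  by_cases hab : a = b
  · exact hab ▸ Reachable.refl a
  · refine SimpleGraph.Adj.reachable ((fromEdgeSet_adj _).mpr ⟨?_, hab⟩)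
    rwa [← (Sym2.mem_and_mem_iff hab).mp ⟨ha, hb⟩]

/-- Each `v ≠ t` is sent to the edge towards a neighbour closer to `t`. -/
lemma card_verts_le_card_add_one
    (hK : ∀ a ∈ verts K, ∀ b ∈ verts K, (fromEdgeSet ↑K).Reachable a b) :
    (verts K).card ≤ K.card + 1 := by
  rcases (verts K).eq_empty_or_nonempty with h | ⟨t, ht⟩
  · simp [h]
  have hpred : ∀ v ∈ (verts K).erase t, ∃ b, s(v, b) ∈ K ∧
      (fromEdgeSet ↑K).dist t b + 1 = (fromEdgeSet ↑K).dist t v := by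
    intro v hv
    obtain ⟨b, hvb, hb⟩ :=
      (hK t ht v (mem_of_mem_erase hv)).exists_adj_dist_add_one_eq (ne_of_mem_erase hv)
    exact ⟨b, ((fromEdgeSet_adj _).mp hvb).1, hb⟩
  choose! p hpK hpd using hpred
  have hinj : Set.InjOn (fun v => s(v, p v)) ((verts K).erase t : Set V) := by
    intro v hv v' hv' hvv'
    rcases Sym2.eq_iff.mp hvv' with ⟨h, -⟩ | ⟨h, h'⟩
    · exact h
    · have h₁ := hpd v hv
      have h₂ := hpd v' hv'
      rw [h'] at h₁
      rw [← h] at h₂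
      omega
  have := card_le_card_of_injOn _ (fun v hv => hpK v hv) hinj
  have := pred_card_le_card_erase (s := verts K) (a := t)
  omega

def componentEdges (H : Finset (Sym2 V)) (t : V) : Finset (Sym2 V) :=
  H.filter fun e => ∀ v ∈ e, (fromEdgeSet ↑H).Reachable t v

lemma reachable_componentEdges {t z : V} (h : (fromEdgeSet ↑H).Reachable t z) :
    (fromEdgeSet ↑(componentEdges H t)).Reachable t z := by
  suffices hwalk : ∀ x, (fromEdgeSet ↑H).Walk x z → (fromEdgeSet ↑H).Reachable t x →
      (fromEdgeSet ↑(componentEdges H t)).Reachable x z by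
    obtain ⟨p⟩ := h
    exact hwalk t p (Reachable.refl t)
  clear h
  intro x q
  induction q with
  | nil => exact fun _ => Reachable.refl _
  | @cons a b c hab q ih =>
    intro hta
    obtain ⟨habH, hne⟩ := (fromEdgeSet_adj _).mp hab
    have hK : s(a, b) ∈ componentEdges H t := mem_filter.mpr
      ⟨habH, fun v hv => hta.trans (reachable_of_mem_of_mem habH (Sym2.mem_mk_left a b) hv)⟩
    exact ((fromEdgeSet_adj _).mpr ⟨hK, hne⟩).reachable.trans (ih (hta.trans hab.reachable))

lemma exists_component {e₀ : Sym2 V} (he₀ : e₀ ∈ H) :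
    ∃ K ⊆ H, e₀ ∈ K ∧ IsAdjClosed K H ∧
      ∀ a ∈ verts K, ∀ b ∈ verts K, (fromEdgeSet ↑K).Reachable a b := by
  set t := e₀.out.1
  have hreach : ∀ a ∈ verts (componentEdges H t),
      (fromEdgeSet ↑(componentEdges H t)).Reachable t a := fun a ha => by
    obtain ⟨e, he, hae⟩ := mem_verts.mp ha
    exact reachable_componentEdges ((mem_filter.mp he).2 a hae)
  refine ⟨componentEdges H t, filter_subset _ _,
    mem_filter.mpr ⟨he₀, fun v hv => reachable_of_mem_of_mem he₀ e₀.out_fst_mem hv⟩,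
    fun e he f hf v hve hvf => ?_, fun a ha b hb => (hreach a ha).symm.trans (hreach b hb)⟩
  exact mem_filter.mpr ⟨hf, fun z hz =>
    ((mem_filter.mp he).2 v hve).trans (reachable_of_mem_of_mem hf hvf hz)⟩

lemma filter_forall_mem_verts_eq {G : Finset (Sym2 V)} (hKG : K ⊆ G) (hK : IsAdjClosed K G) :
    G.filter (fun e => ∀ v ∈ e, v ∈ verts K) = K := by
  ext e
  refine ⟨fun he => ?_, fun he =>
    mem_filter.mpr ⟨hKG he, fun v hv => mem_verts.mpr ⟨e, he, hv⟩⟩⟩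
  obtain ⟨heG, hev⟩ := mem_filter.mp he
  obtain ⟨f, hf, hvf⟩ := mem_verts.mp (hev _ e.out_fst_mem)
  exact hK f hf e heG _ hvf e.out_fst_mem

end Components

def IsMaxWeightMatching (G : Finset (Sym2 V)) (w : Sym2 V → ℕ) (M : Finset (Sym2 V)) : Prop :=
  M ⊆ G ∧ IsMatching M ∧ ∑ e ∈ M, w e = matchWeight G w

section MatchWeight

variable {G K M : Finset (Sym2 V)}

lemma finite_setOf_sum_matching {β : Type*} [AddCommMonoid β] (G : Finset (Sym2 V))
    (w : Sym2 V → β) :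
    {s | ∃ M : Finset (Sym2 V), M ⊆ G ∧ IsMatching M ∧ ∑ e ∈ M, w e = s}.Finite :=
  (G.powerset.finite_toSet.image fun M => ∑ e ∈ M, w e).subset
    (by rintro _ ⟨M, hMG, -, rfl⟩; exact ⟨M, by simpa using hMG, rfl⟩)

lemma le_matchWeight (w : Sym2 V → ℕ) (hMG : M ⊆ G) (hM : IsMatching M) :
    ∑ e ∈ M, w e ≤ matchWeight G w :=
  le_csSup (finite_setOf_sum_matching G w).bddAbove ⟨M, hMG, hM, rfl⟩

lemma le_matchWeightR (w : Sym2 V → ℝ) (hMG : M ⊆ G) (hM : IsMatching M) :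
    ∑ e ∈ M, w e ≤ matchWeightR G w :=
  le_csSup (finite_setOf_sum_matching G w).bddAbove ⟨M, hMG, hM, rfl⟩

lemma matchWeightR_nonneg (G : Finset (Sym2 V)) (w : Sym2 V → ℝ) : 0 ≤ matchWeightR G w := by
  simpa using le_matchWeightR w (empty_subset G) isMatching_empty

lemma exists_isMaxWeightMatching (G : Finset (Sym2 V)) (w : Sym2 V → ℕ) :
    ∃ M, IsMaxWeightMatching G w M := by
  obtain ⟨M, hM⟩ := Nat.sSup_mem
    (s := {s | ∃ M : Finset (Sym2 V), M ⊆ G ∧ IsMatching M ∧ ∑ e ∈ M, w e = s})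
    ⟨0, ∅, empty_subset G, isMatching_empty, sum_empty⟩
    (finite_setOf_sum_matching G w).bddAbove
  exact ⟨M, hM⟩

lemma matchWeight_mono {G' : Finset (Sym2 V)} (h : G' ⊆ G) (w : Sym2 V → ℕ) :
    matchWeight G' w ≤ matchWeight G w := by
  obtain ⟨M, hMG, hM, hMw⟩ := exists_isMaxWeightMatching G' w
  exact hMw ▸ le_matchWeight w (hMG.trans h) hM

lemma matchWeight_filter_ne_zero (G : Finset (Sym2 V)) (w : Sym2 V → ℕ) :
    matchWeight (G.filter (w · ≠ 0)) w = matchWeight G w := by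
  refine le_antisymm (matchWeight_mono (filter_subset _ _) w) ?_
  obtain ⟨M, hMG, hM, hMw⟩ := exists_isMaxWeightMatching G w
  rw [← hMw, ← sum_filter_ne_zero]
  exact le_matchWeight w (filter_subset_filter _ hMG) (hM.subset (filter_subset _ _))

lemma matchWeight_add_matchWeight_sdiff_le (hKG : K ⊆ G) (hK : IsAdjClosed K G)
    (w : Sym2 V → ℕ) : matchWeight K w + matchWeight (G \ K) w ≤ matchWeight G w := by
  obtain ⟨M₁, hM₁K, hM₁, hM₁w⟩ := exists_isMaxWeightMatching K w
  obtain ⟨M₂, hM₂G, hM₂, hM₂w⟩ := exists_isMaxWeightMatching (G \ K) w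
  have hdisj : ∀ e ∈ M₁, ∀ f ∈ M₂, ∀ v ∈ e, v ∉ f := fun e he f hf v hve hvf =>
    (mem_sdiff.mp (hM₂G hf)).2 (hK e (hM₁K he) f (mem_sdiff.mp (hM₂G hf)).1 v hve hvf)
  have hunion := le_matchWeight w (union_subset (hM₁K.trans hKG) (hM₂G.trans sdiff_subset))
    (hM₁.union hM₂ hdisj)
  rwa [sum_union (disjoint_of_subset_left hM₁K (disjoint_of_subset_right hM₂G disjoint_sdiff)),
    hM₁w, hM₂w] at hunion

lemma IsMaxWeightMatching.inter {w : Sym2 V → ℕ} (hM : IsMaxWeightMatching G w M)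
    (hKG : K ⊆ G) (hK : IsAdjClosed K G) : IsMaxWeightMatching K w (M ∩ K) := by
  refine ⟨inter_subset_right, hM.2.1.subset inter_subset_left, le_antisymm
    (le_matchWeight w inter_subset_right (hM.2.1.subset inter_subset_left)) ?_⟩
  have h₁ := le_matchWeight (G := G \ K) w (sdiff_subset_sdiff hM.1 le_rfl)
    (hM.2.1.subset sdiff_subset)
  have h₂ := matchWeight_add_matchWeight_sdiff_le hKG hK w
  have h₃ := sum_inter_add_sum_sdiff M K w
  have h₄ := hM.2.2
  omega

lemma matchWeight_natFloor_mul_le {w : Sym2 V → ℝ} (hw : ∀ e ∈ G, 0 ≤ w e) (k : ℕ) :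
    (matchWeight G (fun e => ⌊k * w e⌋₊) : ℝ) ≤ k * matchWeightR G w := by
  obtain ⟨M, hMG, hM, hMw⟩ := exists_isMaxWeightMatching G (fun e => ⌊k * w e⌋₊)
  rw [← hMw, Nat.cast_sum]
  calc ∑ e ∈ M, (⌊k * w e⌋₊ : ℝ)
      ≤ ∑ e ∈ M, k * w e :=
        sum_le_sum fun e he => Nat.floor_le (mul_nonneg k.cast_nonneg (hw e (hMG he)))
    _ = k * ∑ e ∈ M, w e := (mul_sum _ _ _).symm
    _ ≤ k * matchWeightR G w := mul_le_mul_of_nonneg_left (le_matchWeightR w hMG hM) k.cast_nonneg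

end MatchWeight

/-- For `w = 1` these are the maximum matchings, and the weighted Gallai lemma below follows the
proof of the unweighted one. -/
def IsLexMaxMatching (A : Finset (Sym2 V)) (w : Sym2 V → ℕ) (N : Finset (Sym2 V)) : Prop :=
  N ⊆ A ∧ IsMatching N ∧ ∀ N' ⊆ A, IsMatching N' →
    toLex (∑ e ∈ N', (w e - 1), N'.card) ≤ toLex (∑ e ∈ N, (w e - 1), N.card)

section Gallai

variable {A K M N : Finset (Sym2 V)} {w : Sym2 V → ℕ}

lemma sum_tsub_one_add_card (hw : ∀ e ∈ N, 1 ≤ w e) :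
    ∑ e ∈ N, (w e - 1) + N.card = ∑ e ∈ N, w e := by
  rw [card_eq_sum_ones, ← sum_add_distrib]
  exact sum_congr rfl fun e he => Nat.sub_add_cancel (hw e he)

lemma exists_isLexMaxMatching (A : Finset (Sym2 V)) (w : Sym2 V → ℕ) :
    ∃ N, IsLexMaxMatching A w N := by
  obtain ⟨N, hN, hmax⟩ := (A.powerset.filter IsMatching).exists_max_image
    (fun N => toLex (∑ e ∈ N, (w e - 1), N.card)) ⟨∅, by simp [isMatching_empty]⟩
  simp only [mem_filter, mem_powerset] at hN hmax
  exact ⟨N, hN.1, hN.2, fun N' h₁ h₂ => hmax N' ⟨h₁, h₂⟩⟩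

lemma IsLexMaxMatching.mem_verts_of_adj (hN : IsLexMaxMatching A w N) {a b : V}
    (hab : (fromEdgeSet ↑A).Adj a b) (ha : a ∉ verts N) : b ∈ verts N := by
  by_contra hb
  obtain ⟨habA, hne⟩ := (fromEdgeSet_adj _).mp hab
  have hnot : s(a, b) ∉ N := fun h => ha (mem_verts.mpr ⟨_, h, Sym2.mem_mk_left a b⟩)
  have := hN.2.2 (insert s(a, b) N) (insert_subset habA hN.1) (hN.2.1.insert hne ha hb)
  rw [sum_insert hnot, card_insert_of_notMem hnot, Prod.Lex.toLex_le_toLex'] at this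
  omega

lemma IsLexMaxMatching.symmDiff (hN : IsLexMaxMatching A w N) (hw : ∀ e ∈ A, 1 ≤ w e)
    (hM : IsMaxWeightMatching A w M) (hKNM : K ⊆ N ∆ M) (hK : IsAdjClosed K (N ∆ M))
    (hcard : (K ∩ M).card ≤ (K ∩ N).card) : IsLexMaxMatching A w (N ∆ K) := by
  have hKMN : K ⊆ M ∆ N := symmDiff_comm N M ▸ hKNM
  have hKA : K ⊆ A := hKNM.trans (symmDiff_le_sup.trans (union_subset hN.1 hM.1))
  have hN'A : N ∆ K ⊆ A := symmDiff_le_sup.trans (union_subset hN.1 hKA)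
  have hM'A : M ∆ K ⊆ A := symmDiff_le_sup.trans (union_subset hM.1 hKA)
  have hN' := hN.2.1.symmDiff hM.2.1 hKNM hK
  have hM' := hM.2.1.symmDiff hN.2.1 hKMN (symmDiff_comm N M ▸ hK)
  have hwN := sum_symmDiff_add_sum_inter w N K
  have hwM := sum_symmDiff_add_sum_inter w M K
  have hcN := sum_symmDiff_add_sum_inter (fun _ => 1) N K
  simp only [sum_const, smul_eq_mul, mul_one] at hcN
  rw [sdiff_eq_inter_of_subset_symmDiff hKNM, inter_comm N K] at hwN hcN
  rw [sdiff_eq_inter_of_subset_symmDiff hKMN, inter_comm M K] at hwM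
  have hM'w := le_matchWeight w hM'A hM'
  have hMw := hM.2.2
  have hgN := sum_tsub_one_add_card fun e he => hw e (hN.1 he)
  have hgN' := sum_tsub_one_add_card fun e he => hw e (hN'A he)
  have hle := hN.2.2 _ hN'A hN'
  refine ⟨hN'A, hN', fun N'' h₁ h₂ => (hN.2.2 N'' h₁ h₂).trans ?_⟩
  rw [Prod.Lex.toLex_le_toLex'] at hle ⊢
  omega

/-- Swapping `N` along the component at `t` of `N ∆ M` keeps `N` lexicographically maximal: as `M`
misses `t`, this component has at least as many `N`-edges as `M`-edges, and strictly more when it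
also contains two vertices missed by `N`, which therefore cannot both lie on it. -/
lemma IsLexMaxMatching.exists_swap (hN : IsLexMaxMatching A w N) (hw : ∀ e ∈ A, 1 ≤ w e)
    (hM : IsMaxWeightMatching A w M) {t : V} (htN : t ∈ verts N) (htM : t ∉ verts M) :
    ∃ N', IsLexMaxMatching A w N' ∧ t ∉ verts N' ∧
      ∀ u v, u ≠ v → u ∉ verts N → v ∉ verts N →
        u ∉ verts N' ∨ v ∉ verts N' := by
  obtain ⟨e, heN, hte⟩ := mem_verts.mp htN
  have heNM : e ∈ N ∆ M :=
    mem_symmDiff.mpr (Or.inl ⟨heN, fun heM => htM (mem_verts.mpr ⟨e, heM, hte⟩)⟩)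
  obtain ⟨K, hKNM, heK, hK, hconn⟩ := exists_component heNM
  have htK : t ∈ verts K := mem_verts.mpr ⟨e, heK, hte⟩
  have hcN := card_sdiff_verts_add_two_mul_card (hN.2.1.subset inter_subset_right)
    (verts_mono (inter_subset_left : K ∩ N ⊆ K))
  have hcM := card_sdiff_verts_add_two_mul_card (hM.2.1.subset inter_subset_right)
    (verts_mono (inter_subset_left : K ∩ M ⊆ K))
  have hcK := card_verts_le_card_add_one hconn
  have hsplit : (K ∩ N).card + (K ∩ M).card = K.card := by
    rw [← sdiff_eq_inter_of_subset_symmDiff hKNM, card_inter_add_card_sdiff]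
  have ht : 0 < (verts K \ verts (K ∩ M)).card :=
    card_pos.mpr ⟨t, mem_sdiff.mpr ⟨htK, fun h => htM (verts_mono inter_subset_right h)⟩⟩
  have hstay : ∀ x ∉ verts K, x ∉ verts N → x ∉ verts (N ∆ K) := fun x hxK hxN => by
    rwa [mem_verts_iff_filter_nonempty, filter_mem_symmDiff_of_not_mem_verts hxK,
      ← mem_verts_iff_filter_nonempty]
  refine ⟨N ∆ K, hN.symmDiff hw hM hKNM hK (by omega), ?_, fun u v huv huN hvN => ?_⟩
  · rwa [mem_verts_iff_filter_nonempty, filter_mem_symmDiff_of_mem_verts hKNM hK htK,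
      ← mem_verts_iff_filter_nonempty]
  by_cases huK : u ∈ verts K
  · by_cases hvK : v ∈ verts K
    · have hmiss : ∀ x ∈ verts K, x ∉ verts N → x ∈ verts K \ verts (K ∩ N) :=
        fun x hxK hxN => mem_sdiff.mpr ⟨hxK, fun h => hxN (verts_mono inter_subset_right h)⟩
      have := one_lt_card.mpr ⟨u, hmiss u huK huN, v, hmiss v hvK hvN, huv⟩
      omega
    · exact Or.inr (hstay v hvK hvN)
  · exact Or.inl (hstay u huK huN)

lemma IsLexMaxMatching.card_sdiff_verts_le_one (hN : IsLexMaxMatching A w N)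
    (hw : ∀ e ∈ A, 1 ≤ w e)
    (hconn : ∀ a ∈ verts A, ∀ b ∈ verts A, (fromEdgeSet ↑A).Reachable a b)
    (havoid : ∀ u ∈ verts A, ∃ M, IsMaxWeightMatching A w M ∧ u ∉ verts M) :
    (verts A \ verts N).card ≤ 1 := by
  suffices key : ∀ v u, (fromEdgeSet ↑A).Walk v u → ∀ N, IsLexMaxMatching A w N →
      u ≠ v → u ∉ verts N → v ∉ verts N → False by
    refine card_le_one.mpr fun a ha b hb => by_contra fun hab => ?_
    simp only [mem_sdiff] at ha hb
    obtain ⟨p⟩ := hconn a ha.1 b hb.1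
    exact key a b p N hN (Ne.symm hab) hb.2 ha.2
  intro v u p
  induction p with
  | nil => exact fun _ _ huv => absurd rfl huv
  | @cons v t u hvt q ih =>
    intro N hN huv huN hvN
    have htN := hN.mem_verts_of_adj hvt hvN
    have htu : u ≠ t := fun h => huN (h ▸ htN)
    have htA : t ∈ verts A :=
      mem_verts.mpr ⟨_, ((fromEdgeSet_adj _).mp hvt).1, Sym2.mem_mk_right v t⟩
    obtain ⟨M, hM, htM⟩ := havoid t htA
    obtain ⟨N', hN', htN', hmiss⟩ := hN.exists_swap hw hM htN htM
    rcases hmiss u v huv huN hvN with huN' | hvN'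
    · exact ih N' hN' htu huN' htN'
    · exact hvN' (hN'.mem_verts_of_adj hvt.symm htN')

theorem sum_tsub_one_add_card_verts_div_two_le (hw : ∀ e ∈ A, 1 ≤ w e)
    (hconn : ∀ a ∈ verts A, ∀ b ∈ verts A, (fromEdgeSet ↑A).Reachable a b)
    (havoid : ∀ u ∈ verts A, ∃ M, IsMaxWeightMatching A w M ∧ u ∉ verts M)
    (hNA : N ⊆ A) (hN : IsMatching N) :
    ∑ e ∈ N, (w e - 1) + (verts A).card / 2 ≤ matchWeight A w := by
  obtain ⟨N₁, hN₁⟩ := exists_isLexMaxMatching A w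
  have h₁ := hN₁.card_sdiff_verts_le_one hw hconn havoid
  have h₂ := card_sdiff_verts_add_two_mul_card hN₁.2.1 (verts_mono hN₁.1)
  have h₃ := (Prod.Lex.toLex_le_toLex'.mp (hN₁.2.2 N hNA hN)).1
  have h₄ := sum_tsub_one_add_card fun e he => hw e (hN₁.1 he)
  have h₅ := le_matchWeight w hN₁.1 hN₁.2.1
  omega

end Gallai

def lowerWeight (p : Sym2 V → Prop) [DecidablePred p] (w : Sym2 V → ℕ) : Sym2 V → ℕ :=
  fun e => if p e then w e - 1 else w e

section Lowering

variable {G : Finset (Sym2 V)} {p : Sym2 V → Prop} [DecidablePred p] {w : Sym2 V → ℕ}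

lemma sum_lowerWeight_add_card_filter (hw : ∀ e ∈ G, p e → 1 ≤ w e) :
    ∑ e ∈ G, lowerWeight p w e + (G.filter p).card = ∑ e ∈ G, w e := by
  rw [card_filter, ← sum_add_distrib]
  refine sum_congr rfl fun e he => ?_
  by_cases hpe : p e
  · simp only [lowerWeight, if_pos hpe]
    have := hw e he hpe
    omega
  · simp only [lowerWeight, if_neg hpe, add_zero]

lemma sum_mul_eq_sum_lowerWeight_mul_add (hw : ∀ e ∈ G, p e → 1 ≤ w e)
    (y : Sym2 V → ℝ) :
    ∑ e ∈ G, (w e : ℝ) * y e =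
      ∑ e ∈ G, (lowerWeight p w e : ℝ) * y e + ∑ e ∈ G.filter p, y e := by
  rw [sum_filter, ← sum_add_distrib]
  refine sum_congr rfl fun e he => ?_
  by_cases hpe : p e
  · simp only [lowerWeight, if_pos hpe, Nat.cast_sub (hw e he hpe)]
    ring
  · simp only [lowerWeight, if_neg hpe, add_zero]

lemma matchWeight_lowerWeight_add_one_le (hw : ∀ e ∈ G, 1 ≤ w e) {u : V}
    (hu : ∀ M, IsMaxWeightMatching G w M → u ∈ verts M) :
    matchWeight G (lowerWeight (u ∈ ·) w) + 1 ≤ matchWeight G w := by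
  obtain ⟨M, hMG, hM, hMw⟩ := exists_isMaxWeightMatching G (lowerWeight (u ∈ ·) w)
  have hsum := sum_lowerWeight_add_card_filter (G := M) (p := (u ∈ ·))
    fun e he _ => hw e (hMG he)
  have hle := le_matchWeight w hMG hM
  by_cases hmax : ∑ e ∈ M, w e = matchWeight G w
  · have := card_pos.mpr (mem_verts_iff_filter_nonempty.mp (hu M ⟨hMG, hM, hmax⟩))
    omega
  · omega

lemma matchWeight_lowerWeight_add_card_verts_div_two_le (hw : ∀ e ∈ G, 1 ≤ w e)
    {K : Finset (Sym2 V)} (hKG : K ⊆ G) (hK : IsAdjClosed K G)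
    (hconn : ∀ a ∈ verts K, ∀ b ∈ verts K, (fromEdgeSet ↑K).Reachable a b)
    (havoid : ∀ u, ∃ M, IsMaxWeightMatching G w M ∧ u ∉ verts M) :
    matchWeight G (lowerWeight (· ∈ K) w) + (verts K).card / 2 ≤ matchWeight G w := by
  obtain ⟨M, hMG, hM, hMw⟩ := exists_isMaxWeightMatching G (lowerWeight (· ∈ K) w)
  have hK' := sum_tsub_one_add_card_verts_div_two_le (A := K) (fun e he => hw e (hKG he)) hconn
    (fun u _ => let ⟨M', hM', huM'⟩ := havoid u
      ⟨M' ∩ K, hM'.inter hKG hK, fun h => huM' (verts_mono inter_subset_left h)⟩)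
    inter_subset_right (hM.subset (inter_subset_left : M ∩ K ⊆ M))
  have hR := le_matchWeight (G := G \ K) w (sdiff_subset_sdiff hMG le_rfl) (hM.subset sdiff_subset)
  have hsplit := matchWeight_add_matchWeight_sdiff_le hKG hK w
  have h₁ : ∑ e ∈ M ∩ K, lowerWeight (· ∈ K) w e = ∑ e ∈ M ∩ K, (w e - 1) :=
    sum_congr rfl fun e he => if_pos (mem_inter.mp he).2
  have h₂ : ∑ e ∈ M \ K, lowerWeight (· ∈ K) w e = ∑ e ∈ M \ K, w e :=
    sum_congr rfl fun e he => if_neg (mem_sdiff.mp he).2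
  have h₃ := sum_inter_add_sum_sdiff M K (lowerWeight (· ∈ K) w)
  omega

end Lowering

/-- `y` lies in Edmonds' matching polytope of `G`. -/
structure IsBlossomFeasible (G : Finset (Sym2 V)) (y : Sym2 V → ℝ) : Prop where
  nonneg : ∀ e ∈ G, 0 ≤ y e
  sum_incident_le_one : ∀ u, ∑ e ∈ G.filter (u ∈ ·), y e ≤ 1
  sum_induced_le : ∀ S : Finset V,
    ∑ e ∈ G.filter (fun e => ∀ v ∈ e, v ∈ S), y e ≤ ((S.card / 2 : ℕ) : ℝ)

namespace IsBlossomFeasible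

variable {G : Finset (Sym2 V)} {y : Sym2 V → ℝ}

lemma mono (hy : IsBlossomFeasible G y) {G' : Finset (Sym2 V)} (h : G' ⊆ G) :
    IsBlossomFeasible G' y where
  nonneg e he := hy.nonneg e (h he)
  sum_incident_le_one u := (sum_le_sum_of_subset_of_nonneg (filter_subset_filter _ h)
    fun e he _ => hy.nonneg e (mem_filter.mp he).1).trans (hy.sum_incident_le_one u)
  sum_induced_le S := (sum_le_sum_of_subset_of_nonneg (filter_subset_filter _ h)
    fun e he _ => hy.nonneg e (mem_filter.mp he).1).trans (hy.sum_induced_le S)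

lemma sum_mul_le_matchWeight_of_pos (hy : IsBlossomFeasible G y) {w : Sym2 V → ℕ}
    (hw : ∀ e ∈ G, 1 ≤ w e)
    (ih : ∀ w' : Sym2 V → ℕ, ∑ e ∈ G, w' e < ∑ e ∈ G, w e →
      ∑ e ∈ G, (w' e : ℝ) * y e ≤ matchWeight G w') :
    ∑ e ∈ G, (w e : ℝ) * y e ≤ matchWeight G w := by
  rcases G.eq_empty_or_nonempty with rfl | ⟨e₀, he₀⟩
  · simp
  -- Lowering `w` by one on the edges in `p` costs `∑ w y` at most `b`, and `μ_w` at least `b`.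
  suffices ∃ (p : Sym2 V → Prop) (_ : DecidablePred p) (b : ℕ), (∃ e ∈ G, p e) ∧
      ∑ e ∈ G.filter p, y e ≤ b ∧ matchWeight G (lowerWeight p w) + b ≤ matchWeight G w by
    obtain ⟨p, _, b, ⟨e, he, hpe⟩, hyb, hμ⟩ := this
    have hcard := sum_lowerWeight_add_card_filter (p := p) fun e he _ => hw e he
    have hpos : 0 < (G.filter p).card := card_pos.mpr ⟨e, mem_filter.mpr ⟨he, hpe⟩⟩
    have hlow := ih (lowerWeight p w) (by omega)
    have hμ' : (matchWeight G (lowerWeight p w) : ℝ) + b ≤ matchWeight G w := by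
      exact_mod_cast hμ
    rw [sum_mul_eq_sum_lowerWeight_mul_add (p := p) (fun e he _ => hw e he) y]
    linarith
  by_cases hcover : ∃ u, ∀ M, IsMaxWeightMatching G w M → u ∈ verts M
  · obtain ⟨u, hu⟩ := hcover
    obtain ⟨M, hM⟩ := exists_isMaxWeightMatching G w
    obtain ⟨e, he, hue⟩ := mem_verts.mp (hu M hM)
    exact ⟨(u ∈ ·), inferInstance, 1, ⟨e, hM.1 he, hue⟩,
      by exact_mod_cast hy.sum_incident_le_one u, matchWeight_lowerWeight_add_one_le hw hu⟩
  · push Not at hcover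
    obtain ⟨K, hKG, he₀K, hK, hconn⟩ := exists_component he₀
    refine ⟨(· ∈ K), inferInstance, (verts K).card / 2, ⟨e₀, he₀, he₀K⟩, ?_,
      matchWeight_lowerWeight_add_card_verts_div_two_le hw hKG hK hconn hcover⟩
    rw [filter_mem_eq_inter, inter_eq_right.mpr hKG]
    simpa only [filter_forall_mem_verts_eq hKG hK] using hy.sum_induced_le (verts K)

theorem sum_mul_le_matchWeight (hy : IsBlossomFeasible G y) (w : Sym2 V → ℕ) :
    ∑ e ∈ G, (w e : ℝ) * y e ≤ matchWeight G w := by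
  induction hn : ∑ e ∈ G, w e using Nat.strong_induction_on generalizing G w with
  | _ n ih =>
  have hpos : ∀ e ∈ G.filter (w · ≠ 0), 1 ≤ w e := fun e he =>
    Nat.one_le_iff_ne_zero.mpr (mem_filter.mp he).2
  rw [← matchWeight_filter_ne_zero,
    ← sum_filter_of_ne (p := (w · ≠ 0)) fun e _ h hwe => h (by simp [hwe])]
  refine (hy.mono (filter_subset _ G)).sum_mul_le_matchWeight_of_pos hpos fun w' hw' => ?_
  rw [sum_filter_ne_zero, hn] at hw'
  exact ih _ hw' (hy.mono (filter_subset _ G)) w' rfl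

theorem sum_mul_le_matchWeightR (hy : IsBlossomFeasible G y) (w : Sym2 V → ℝ)
    (hw : ∀ e ∈ G, 0 ≤ w e) : ∑ e ∈ G, w e * y e ≤ matchWeightR G w := by
  have hk : ∀ k : ℕ, k * (∑ e ∈ G, w e * y e - matchWeightR G w) ≤ ∑ e ∈ G, y e := by
    intro k
    have h₁ := hy.sum_mul_le_matchWeight (fun e => ⌊k * w e⌋₊)
    have h₂ := matchWeight_natFloor_mul_le hw k
    have h₃ : ∑ e ∈ G, (k * w e - 1) * y e ≤ ∑ e ∈ G, (⌊k * w e⌋₊ : ℝ) * y e :=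
      sum_le_sum fun e he => mul_le_mul_of_nonneg_right (Nat.sub_one_lt_floor _).le (hy.nonneg e he)
    simp only [sub_mul, sum_sub_distrib, one_mul, mul_assoc, ← mul_sum] at h₃
    linarith
  by_contra! h
  obtain ⟨k, hk'⟩ :=
    exists_nat_gt ((∑ e ∈ G, y e) / (∑ e ∈ G, w e * y e - matchWeightR G w))
  have := (div_lt_iff₀ (sub_pos.mpr h)).mp hk'
  linarith [hk k]

end IsBlossomFeasible

section Scaling

variable {G : Finset (Sym2 V)} {x : Sym2 V → ℝ}

lemma two_mul_sum_induced_le_sum_sum_incident (hG : ∀ e ∈ G, ¬ e.IsDiag)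
    (hx : ∀ e ∈ G, 0 ≤ x e) (S : Finset V) :
    2 * ∑ e ∈ G.filter (fun e => ∀ v ∈ e, v ∈ S), x e ≤
      ∑ v ∈ S, ∑ e ∈ G.filter (v ∈ ·), x e := by
  calc 2 * ∑ e ∈ G.filter (fun e => ∀ v ∈ e, v ∈ S), x e
      = ∑ e ∈ G.filter (fun e => ∀ v ∈ e, v ∈ S), ∑ _ ∈ S.filter (· ∈ e), x e := by
        rw [mul_sum]
        refine sum_congr rfl fun e he => ?_
        obtain ⟨heG, heS⟩ := mem_filter.mp he
        have : S.filter (· ∈ e) = e.toFinset := by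
          ext v
          simp only [mem_filter, Sym2.mem_toFinset]
          exact ⟨And.right, fun hv => ⟨heS v hv, hv⟩⟩
        rw [sum_const, this, Sym2.card_toFinset_of_not_isDiag e (hG e heG), nsmul_eq_mul,
          Nat.cast_ofNat]
    _ = ∑ v ∈ S, ∑ e ∈ (G.filter (fun e => ∀ v ∈ e, v ∈ S)).filter (v ∈ ·), x e :=
        sum_comm' fun e v => by simp only [mem_filter]; tauto
    _ ≤ ∑ v ∈ S, ∑ e ∈ G.filter (v ∈ ·), x e :=
        sum_le_sum fun v _ => sum_le_sum_of_subset_of_nonneg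
          (filter_subset_filter _ (filter_subset _ _)) fun e he _ => hx e (mem_filter.mp he).1

lemma isBlossomFeasible_one_sub_mul (hG : ∀ e ∈ G, ¬ e.IsDiag) {ε : ℝ} (hε : 0 < ε)
    (hε1 : ε ≤ 1) (hx0 : ∀ e ∈ G, 0 ≤ x e)
    (hfrac : ∀ u : V, ∑ e ∈ G.filter (fun e => u ∈ e), x e ≤ 1)
    (hblossom : ∀ S : Finset V, (S.card : ℝ) ≤ 1 / ε →
      ∑ e ∈ G.filter (fun e => ∀ v ∈ e, v ∈ S), x e ≤ ((S.card / 2 : ℕ) : ℝ)) :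
    IsBlossomFeasible G (fun e => (1 - ε) * x e) where
  nonneg e he := mul_nonneg (by linarith) (hx0 e he)
  sum_incident_le_one u := by
    rw [← mul_sum]
    exact mul_le_one₀ (by linarith) (sum_nonneg fun e he => hx0 e (mem_filter.mp he).1) (hfrac u)
  sum_induced_le S := by
    rw [← mul_sum]
    have ha : 0 ≤ ∑ e ∈ G.filter (fun e => ∀ v ∈ e, v ∈ S), x e :=
      sum_nonneg fun e he => hx0 e (mem_filter.mp he).1
    rcases le_or_gt (S.card : ℝ) (1 / ε) with hS | hS
    · exact (mul_le_of_le_one_left ha (by linarith)).trans (hblossom S hS)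
    have hdeg := two_mul_sum_induced_le_sum_sum_incident hG hx0 S
    have hinc : ∑ v ∈ S, ∑ e ∈ G.filter (v ∈ ·), x e ≤ S.card := by
      simpa using sum_le_sum fun v (_ : v ∈ S) => hfrac v
    have hεS : 1 < S.card * ε := (div_lt_iff₀ hε).mp hS
    have hfloor : (S.card : ℝ) ≤ 2 * ((S.card / 2 : ℕ) : ℝ) + 1 := by
      exact_mod_cast (by omega : S.card ≤ 2 * (S.card / 2) + 1)
    nlinarith [mul_nonneg (sub_nonneg.mpr hε1) (by linarith : 0 ≤ (S.card : ℝ) -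
      2 * ∑ e ∈ G.filter (fun e => ∀ v ∈ e, v ∈ S), x e)]

end Scaling

theorem approximate_blossom_rounding_general
    (G : Finset (Sym2 V)) (hG : ∀ e ∈ G, ¬ e.IsDiag)
    (w x : Sym2 V → ℝ) (hw : ∀ e ∈ G, 0 ≤ w e)
    (ε : ℝ) (hε : 0 < ε)
    (hx0 : ∀ e, 0 ≤ x e)
    (hfrac : ∀ u : V, ∑ e ∈ G.filter (fun e => u ∈ e), x e ≤ 1)
    (hblossom : ∀ S : Finset V, (S.card : ℝ) ≤ 1 / ε →
      ∑ e ∈ G.filter (fun e => ∀ v ∈ e, v ∈ S), x e ≤ ((S.card / 2 : ℕ) : ℝ)) :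
    matchWeightR G w ≥ (1 - ε) * ∑ e ∈ G, w e * x e := by
  rcases le_or_gt ε 1 with hε1 | hε1
  · have hy := isBlossomFeasible_one_sub_mul hG hε hε1 (fun e _ => hx0 e) hfrac hblossom
    calc (1 - ε) * ∑ e ∈ G, w e * x e = ∑ e ∈ G, w e * ((1 - ε) * x e) := by
          rw [mul_sum]
          exact sum_congr rfl fun e _ => by ring
      _ ≤ matchWeightR G w := hy.sum_mul_le_matchWeightR w hw
  · have := sum_nonneg fun e he => mul_nonneg (hw e he) (hx0 e)
    nlinarith [matchWeightR_nonneg G w]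

/-- approximate blossom inequality: if a fractional matching `x` on a
weighted graph `G` satisfies Σ_{e ∈ G[S]} x_e ≤ ⌊|S|/2⌋ for every vertex set `S` with
|S| ≤ 1/ε, then μ_w(G) ≥ (1−ε)·Σ_e w_e x_e. -/
theorem approximate_blossom_rounding
    (G : Finset (Sym2 V)) (hG : ∀ e ∈ G, ¬ e.IsDiag)
    (w x : Sym2 V → ℝ) (hw : ∀ e ∈ G, 0 ≤ w e)
    (ε : ℝ) (hε : 0 < ε)
    (hx0 : ∀ e, 0 ≤ x e) (hx1 : ∀ e, x e ≤ 1)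
    (hfrac : ∀ u : V, ∑ e ∈ G.filter (fun e => u ∈ e), x e ≤ 1)
    (hblossom : ∀ S : Finset V, (S.card : ℝ) ≤ 1 / ε →
      ∑ e ∈ G.filter (fun e => ∀ v ∈ e, v ∈ S), x e ≤ ((S.card / 2 : ℕ) : ℝ)) :
    matchWeightR G w ≥ (1 - ε) * ∑ e ∈ G, w e * x e :=
  approximate_blossom_rounding_general G hG w x hw ε hε hx0 hfrac hblossom
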